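/- Mixed sectional curvature trace identity: for Σ a k-dimensional submanifold of (Ω, g) with Ω ⊂ ℝⁿ Euclidean and g̃ = e^{2u}g, at each point, e^{2u} Σ_{i=1}^k Σ_{r=k+1}^n K_{g̃}(v_i, v_r) = (n−k)|∇^⊤u|²_g + k|∇^⊥u|²_g − k(n−k)|∇u|²_g − (n−k) div_Σ(∇u) − k Σ_{r=k+1}^n ∇²u(v_r, v_r), where {v₁,…,v_n} is a g-orthonormal frame with first k vectors tangent to Σ. -/

import Mathlib

noncomputable section

open MeasureTheory
open scoped RealInnerProductSpace

/-- Vector fields on `ℝⁿ`. -/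
abbrev VF (n : ℕ) := EuclideanSpace ℝ (Fin n) → EuclideanSpace ℝ (Fin n)

/-- The standard orthonormal basis of `ℝⁿ`. -/
def ebasis (n : ℕ) : Fin n → EuclideanSpace ℝ (Fin n) := fun i => EuclideanSpace.basisFun (Fin n) ℝ i

/-- The Levi-Civita connection of the conformal metric `g̃ = e^{2u}⟨·,·⟩` on a domain of
Euclidean `ℝⁿ`:  `∇̃_X Y = d_X Y + X(u)Y + Y(u)X − ⟨X,Y⟩∇u`. -/
def confD {n : ℕ} (u : EuclideanSpace ℝ (Fin n) → ℝ) (X Y : VF n) : VF n := fun p =>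
  fderiv ℝ Y p (X p) + (fderiv ℝ u p (X p)) • Y p + (fderiv ℝ u p (Y p)) • X p
    - ⟪X p, Y p⟫ • gradient u p

/-- The directional version `∇̃_v Y` (the connection is tensorial in the direction). -/
def confDdir {n : ℕ} (u : EuclideanSpace ℝ (Fin n) → ℝ) (v : EuclideanSpace ℝ (Fin n))
    (Y : VF n) (p : EuclideanSpace ℝ (Fin n)) : EuclideanSpace ℝ (Fin n) :=
  fderiv ℝ Y p v + (fderiv ℝ u p v) • Y p + (fderiv ℝ u p (Y p)) • v
    - ⟪v, Y p⟫ • gradient u p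

/-- Riemann curvature tensor of `g̃ = e^{2u}⟨·,·⟩`, with the convention
`R(X,Y)Z = ∇̃_Y ∇̃_X Z − ∇̃_X ∇̃_Y Z + ∇̃_{[X,Y]} Z`. -/
def confR {n : ℕ} (u : EuclideanSpace ℝ (Fin n) → ℝ) (X Y Z : VF n) : VF n :=
  confD u Y (confD u X Z) - confD u X (confD u Y Z)
    + confD u (fun p => fderiv ℝ Y p (X p) - fderiv ℝ X p (Y p)) Z

/-- Sectional curvature of `g̃ = e^{2u}⟨·,·⟩` at `p` for the plane spanned by `v, w`
(computed on the constant extensions of `v`, `w`, which is legitimate by tensoriality):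
`K_{g̃}(v,w) = g̃(R̃(v,w)v,w) / (|v|²_{g̃}|w|²_{g̃} − g̃(v,w)²)`. -/
def confSec {n : ℕ} (u : EuclideanSpace ℝ (Fin n) → ℝ) (p v w : EuclideanSpace ℝ (Fin n)) : ℝ :=
  (Real.exp (2 * u p) * ⟪confR u (fun _ => v) (fun _ => w) (fun _ => v) p, w⟫) /
    ((Real.exp (2 * u p) * ‖v‖ ^ 2) * (Real.exp (2 * u p) * ‖w‖ ^ 2)
      - (Real.exp (2 * u p) * ⟪v, w⟫) ^ 2)

/-- The Euclidean Hessian `∇²u(v,w)`. -/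
def hessE {n : ℕ} (u : EuclideanSpace ℝ (Fin n) → ℝ) (p v w : EuclideanSpace ℝ (Fin n)) : ℝ :=
  ⟪fderiv ℝ (gradient u) p v, w⟫


/-! ### Auxiliary lemmas -/

lemma diff_grad_aux {n : ℕ} (u : EuclideanSpace ℝ (Fin n) → ℝ) (hu : ContDiff ℝ (⊤ : ℕ∞) u) :
    Differentiable ℝ (gradient u) := by
  have h1 : ContDiff ℝ (⊤ : ℕ∞) (fderiv ℝ u) := hu.fderiv_right (by simp)
  set e := (EuclideanSpace.basisFun (Fin n) ℝ)
  have hgrad_eq : gradient u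
      = fun q => ∑ i, (fderiv ℝ u q (e i)) • (e i : EuclideanSpace ℝ (Fin n)) := by
    funext q
    rw [← e.sum_repr (gradient u q)]
    congr 1; funext i
    rw [e.repr_apply_apply]
    congr 1
    rw [real_inner_comm]
    exact InnerProductSpace.toDual_symm_apply
  rw [hgrad_eq]
  exact Differentiable.fun_sum fun i _ =>
    ((h1.differentiable (by simp)).clm_apply (differentiable_const _)).smul_const _

lemma confR_inner_aux {n : ℕ} (u : EuclideanSpace ℝ (Fin n) → ℝ) (hu : ContDiff ℝ (⊤ : ℕ∞) u)
    (p v w : EuclideanSpace ℝ (Fin n)) (hv : ‖v‖ = 1) (hw : ‖w‖ = 1) (hvw : ⟪v, w⟫ = 0) :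
    ⟪confR u (fun _ => v) (fun _ => w) (fun _ => v) p, w⟫ =
      ⟪gradient u p, v⟫ ^ 2 + ⟪gradient u p, w⟫ ^ 2 - ‖gradient u p‖ ^ 2
        - hessE u p v v - hessE u p w w := by
  have hgd : Differentiable ℝ (gradient u) := diff_grad_aux u hu
  have key : ∀ (q x : EuclideanSpace ℝ (Fin n)), fderiv ℝ u q x = ⟪gradient u q, x⟫ :=
    fun q x => InnerProductSpace.toDual_symm_apply.symm
  have hvv : ⟪v, v⟫ = 1 := by rw [real_inner_self_eq_norm_sq, hv]; norm_num
  have hww : ⟪w, w⟫ = 1 := by rw [real_inner_self_eq_norm_sq, hw]; norm_num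
  have hwv : ⟪w, v⟫ = 0 := by rw [real_inner_comm]; exact hvw
  have hinner : ∀ x : EuclideanSpace ℝ (Fin n),
      Differentiable ℝ (fun q => ⟪gradient u q, x⟫) :=
    fun x => hgd.inner ℝ (differentiable_const x)
  have hinner_fderiv : ∀ (x : EuclideanSpace ℝ (Fin n)) (y : EuclideanSpace ℝ (Fin n)),
      fderiv ℝ (fun q => ⟪gradient u q, x⟫) p y = ⟪fderiv ℝ (gradient u) p y, x⟫ := by
    intro x y
    rw [fderiv_inner_apply ℝ (hgd p) (differentiableAt_const x) y]
    simp
  have A_eq : confD u (fun _ => v) (fun _ => v)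
      = fun q => (2 * ⟪gradient u q, v⟫) • v - gradient u q := by
    funext q
    simp only [confD, fderiv_fun_const, Pi.zero_apply, ContinuousLinearMap.zero_apply, key, hvv]
    module
  have B_eq : confD u (fun _ => w) (fun _ => v)
      = fun q => ⟪gradient u q, w⟫ • v + ⟪gradient u q, v⟫ • w := by
    funext q
    simp only [confD, fderiv_fun_const, Pi.zero_apply, ContinuousLinearMap.zero_apply, key, hwv]
    module
  have hfA : fderiv ℝ (fun q => (2 * ⟪gradient u q, v⟫) • v - gradient u q) p w
      = (2 * ⟪fderiv ℝ (gradient u) p w, v⟫) • v - fderiv ℝ (gradient u) p w := by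
    rw [fderiv_fun_sub (((hinner v).const_mul 2).smul_const v |>.differentiableAt) (hgd p)]
    rw [ContinuousLinearMap.sub_apply]
    congr 1
    rw [fderiv_smul_const (((hinner v).const_mul 2) p) v]
    rw [ContinuousLinearMap.smulRight_apply]
    congr 1
    rw [fderiv_const_mul ((hinner v) p) 2, ContinuousLinearMap.smul_apply, hinner_fderiv]
    simp
  have hfB : fderiv ℝ (fun q => ⟪gradient u q, w⟫ • v + ⟪gradient u q, v⟫ • w) p v
      = ⟪fderiv ℝ (gradient u) p v, w⟫ • v + ⟪fderiv ℝ (gradient u) p v, v⟫ • w := by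
    rw [fderiv_fun_add ((hinner w).smul_const v |>.differentiableAt)
      ((hinner v).smul_const w |>.differentiableAt), ContinuousLinearMap.add_apply]
    rw [fderiv_smul_const ((hinner w) p) v, fderiv_smul_const ((hinner v) p) w]
    rw [ContinuousLinearMap.smulRight_apply, ContinuousLinearMap.smulRight_apply,
      hinner_fderiv, hinner_fderiv]
  have hgv : ⟪v, gradient u p⟫ = ⟪gradient u p, v⟫ := real_inner_comm _ _
  have hgw : ⟪w, gradient u p⟫ = ⟪gradient u p, w⟫ := real_inner_comm _ _
  have hZ : (fun q => fderiv ℝ (fun _ : EuclideanSpace ℝ (Fin n) => w) q v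
      - fderiv ℝ (fun _ : EuclideanSpace ℝ (Fin n) => v) q w)
      = fun _ => (0 : EuclideanSpace ℝ (Fin n)) := by
    funext q; simp
  simp only [confR, Pi.add_apply, Pi.sub_apply, hZ]
  rw [show confD u (fun _ => (0 : EuclideanSpace ℝ (Fin n))) (fun _ => v) p = 0 by
    simp only [confD, fderiv_fun_const, Pi.zero_apply, ContinuousLinearMap.zero_apply, map_zero,
      zero_smul, smul_zero, inner_zero_left, add_zero, zero_add, sub_zero]]
  simp only [confD, A_eq, B_eq, hfA, hfB, key, hessE]
  simp only [fderiv_fun_const, Pi.zero_apply, ContinuousLinearMap.zero_apply]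
  simp only [inner_add_left, inner_add_right, inner_sub_left, inner_sub_right,
    real_inner_smul_left, real_inner_smul_right, inner_zero_left, inner_zero_right,
    hvv, hww, hvw, hwv, hgv, hgw, real_inner_self_eq_norm_sq]
  ring

lemma norm_sum_sq_aux {n : ℕ} (b : OrthonormalBasis (Fin n) ℝ (EuclideanSpace ℝ (Fin n)))
    (c : Fin n → ℝ) (s : Finset (Fin n)) :
    ‖∑ i ∈ s, c i • b i‖ ^ 2 = ∑ i ∈ s, (c i) ^ 2 := by
  rw [← real_inner_self_eq_norm_sq, b.orthonormal.inner_sum]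
  simp [pow_two]

/-- mixed sectional curvature trace identity, for `Σ` a
`k`-dimensional submanifold of a Euclidean domain `Ω ⊆ ℝⁿ` and `g̃ = e^{2u}g`.
`{b i}` is a `g`-orthonormal frame at `p` whose first `k` vectors are tangent to `Σ`;
`∇^⊤u = Σ_{i<k}⟨∇u,bᵢ⟩bᵢ`, `∇^⊥u = Σ_{r≥k}⟨∇u,b_r⟩b_r`, and
`div_Σ(∇u) = Σ_{i<k} ∇²u(bᵢ,bᵢ)`. -/
theorem mixed_sectional_trace {n k : ℕ} (hk : k ≤ n)
    (u : EuclideanSpace ℝ (Fin n) → ℝ) (hu : ContDiff ℝ (⊤ : ℕ∞) u)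
    (b : OrthonormalBasis (Fin n) ℝ (EuclideanSpace ℝ (Fin n)))
    (p : EuclideanSpace ℝ (Fin n)) :
    Real.exp (2 * u p) *
        ∑ i ∈ Finset.univ.filter (fun i : Fin n => (i : ℕ) < k), ∑ r ∈ Finset.univ.filter (fun r : Fin n => k ≤ (r : ℕ)), confSec u p (b i) (b r)
      = ((n : ℝ) - k) * ‖∑ i ∈ Finset.univ.filter (fun i : Fin n => (i : ℕ) < k), ⟪gradient u p, b i⟫ • b i‖ ^ 2
        + (k : ℝ) * ‖∑ r ∈ Finset.univ.filter (fun r : Fin n => k ≤ (r : ℕ)), ⟪gradient u p, b r⟫ • b r‖ ^ 2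
        - (k : ℝ) * ((n : ℝ) - k) * ‖gradient u p‖ ^ 2
        - ((n : ℝ) - k) * ∑ i ∈ Finset.univ.filter (fun i : Fin n => (i : ℕ) < k), hessE u p (b i) (b i)
        - (k : ℝ) * ∑ r ∈ Finset.univ.filter (fun r : Fin n => k ≤ (r : ℕ)), hessE u p (b r) (b r) := by
    classical
  have hgd : Differentiable ℝ (gradient u) := diff_grad_aux u hu
  set F1 := Finset.univ.filter (fun i : Fin n => (i : ℕ) < k) with hF1
  set F2 := Finset.univ.filter (fun r : Fin n => k ≤ (r : ℕ)) with hF2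
  have card1 : F1.card = k := by
    rw [hF1, show Finset.univ.filter (fun i : Fin n => (i : ℕ) < k)
        = (Finset.range k).attachFin (fun m hm => lt_of_lt_of_le (Finset.mem_range.mp hm) hk) by
      ext i; simp [Finset.mem_attachFin]]
    rw [Finset.card_attachFin, Finset.card_range]
  have card2 : F2.card = n - k := by
    have h := Finset.card_filter_add_card_filter_not
      (s := (Finset.univ : Finset (Fin n))) (p := fun i : Fin n => (i : ℕ) < k)
    have h2 : (Finset.univ.filter (fun i : Fin n => ¬ (i : ℕ) < k)) = F2 := by
      rw [hF2]; ext i; simp [not_lt]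
    rw [h2, card1, Finset.card_univ, Fintype.card_fin] at h
    omega
  have hsec : ∀ i ∈ F1, ∀ r ∈ F2, Real.exp (2 * u p) * confSec u p (b i) (b r)
      = ⟪gradient u p, b i⟫ ^ 2 + ⟪gradient u p, b r⟫ ^ 2 - ‖gradient u p‖ ^ 2
        - hessE u p (b i) (b i) - hessE u p (b r) (b r) := by
    intro i hi r hr
    have hi' : (i : ℕ) < k := by simpa [hF1] using hi
    have hr' : k ≤ (r : ℕ) := by simpa [hF2] using hr
    have hir : i ≠ r := by intro h; rw [h] at hi'; omega
    have h0 : ⟪b i, b r⟫ = 0 := b.orthonormal.2 hir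
    have hni : ‖b i‖ = 1 := b.orthonormal.1 i
    have hnr : ‖b r‖ = 1 := b.orthonormal.1 r
    have hcur := confR_inner_aux u hu p (b i) (b r) hni hnr h0
    unfold confSec
    rw [hcur, hni, hnr, h0]
    have hE : Real.exp (2 * u p) ≠ 0 := Real.exp_ne_zero _
    field_simp
    ring
  simp only [Finset.mul_sum]
  rw [Finset.sum_congr rfl (fun i hi =>
    Finset.sum_congr rfl (fun r hr => hsec i hi r hr))]
  rw [norm_sum_sq_aux b (fun i => ⟪gradient u p, b i⟫) F1,
    norm_sum_sq_aux b (fun r => ⟪gradient u p, b r⟫) F2]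
  simp only [Finset.sum_sub_distrib, Finset.sum_add_distrib, Finset.sum_const, card1, card2,
    nsmul_eq_mul, Finset.mul_sum]
  have hcast : ((n - k : ℕ) : ℝ) = (n : ℝ) - k := by
    push_cast [hk]; ring
  rw [hcast]
  ring
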